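/- arXiv:1804.01009 — 8 statements merged into one kernel-verified Lean document; each statement's English description precedes it below -/
import Mathlib

section
/- Let $G$ be a finite group acting on a finite partially ordered set $P$ so that the action preserves the order. Define the strong compatibility graph $\widetilde{C}_P$ to have vertex set $P$, with $x$ and $y$ adjacent iff $y \notin \{g \cdot x : g \in G\}$ and there exists $g \in G$, $g \neq e$, such that $x$ and $g\cdot y$ are comparable in $P$. Then the chromatic number of $\widetilde{C}_P$ is at most $\dim(P)+1$, where $\dim(P)$ is the length of the longest chain in $P$ (number of elements minus one). -/
/-!
Colour each element by its height. The action is by order automorphisms, so it preserves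
heights; and two comparable elements of the same finite height coincide. Hence if `x` is
comparable with `g • y` and has the same height as `y`, then `x = g • y` lies in the orbit
of `y`, so adjacent vertices of the strong compatibility graph get different colours, and
there are at most `dim P + 1` heights.
-/

/-- The strong compatibility graph of a `G`-poset `P`: vertices are elements of `P`,
and `x, y` are adjacent iff `y` is not in the `G`-orbit of `x` and there is a
nonidentity `g` such that `x` and `g • y` are comparable. -/
def strongCompat (G P : Type*) [Group G] [PartialOrder P] [MulAction G P] :
    SimpleGraph P :=
  SimpleGraph.fromRel (fun x y =>
    (¬ ∃ g : G, g • x = y) ∧ ∃ g : G, g ≠ 1 ∧ (x ≤ g • y ∨ g • y ≤ x))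

open Order

lemma Order.height_le_of_forall_chain_length_le {α : Type*} [Preorder α] {d : ℕ}
    (hdim : ∀ l : List α, l.IsChain (· < ·) → l.length ≤ d + 1) (a : α) : height a ≤ d :=
  height_le fun p _ ↦ by
    have := hdim p.toList p.isChain_toList
    rw [p.length_toList] at this
    exact_mod_cast Nat.le_of_succ_le_succ this

lemma Order.eq_of_le_of_height_eq {α : Type*} [PartialOrder α] {a b : α} (hab : a ≤ b)
    (h : height a = height b) (ha : height a ≠ ⊤) : a = b := by
  by_contra hne
  have := height_add_one_le (lt_of_le_of_ne hab hne)
  rw [← h, ENat.add_one_le_iff ha] at this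
  exact lt_irrefl _ this

lemma SimpleGraph.colorable_of_adj_height_ne {α : Type*} [Preorder α] (Γ : SimpleGraph α)
    {d : ℕ} (hd : ∀ a : α, height a ≤ d) (hadj : ∀ a b, Γ.Adj a b → height a ≠ height b) :
    Γ.Colorable (d + 1) := by
  have hfin (a : α) : height a ≠ ⊤ := ne_top_of_le_ne_top (ENat.natCast_ne_top d) (hd a)
  refine ⟨Coloring.mk (fun a ↦ ⟨(height a).toNat,
    Nat.lt_succ_of_le (ENat.toNat_le_of_le_natCast (hd a))⟩) fun {a b} hab hcol ↦ ?_⟩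
  apply hadj a b hab
  rw [← ENat.natCast_toNat (hfin a), ← ENat.natCast_toNat (hfin b)]
  exact congrArg _ (Fin.mk.inj_iff.mp hcol)

section MonotoneAction

variable {G P : Type*} [Group G] [PartialOrder P] [MulAction G P]

def MulAction.toOrderIsoOfMonotone (hmono : ∀ (g : G) (x y : P), x ≤ y → g • x ≤ g • y)
    (g : G) : P ≃o P where
  toEquiv := MulAction.toPerm g
  map_rel_iff' := ⟨fun h ↦ by simpa using hmono g⁻¹ _ _ h, hmono g _ _⟩

lemma height_smul_of_monotone (hmono : ∀ (g : G) (x y : P), x ≤ y → g • x ≤ g • y)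
    (g : G) (x : P) : height (g • x) = height x :=
  height_orderIso (MulAction.toOrderIsoOfMonotone hmono g) x

lemma exists_smul_eq_of_comparable_smul_of_height_eq
    (hmono : ∀ (g : G) (x y : P), x ≤ y → g • x ≤ g • y) {x y : P} {g : G}
    (hcomp : x ≤ g • y ∨ g • y ≤ x) (h : height x = height y) (hx : height x ≠ ⊤) :
    ∃ g : G, g • x = y := by
  have hgy : height x = height (g • y) := by rw [height_smul_of_monotone hmono, h]
  have hxgy : x = g • y := hcomp.elim (eq_of_le_of_height_eq · hgy hx)
    fun hle ↦ (eq_of_le_of_height_eq hle hgy.symm (hgy ▸ hx)).symm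
  exact ⟨g⁻¹, by rw [hxgy, inv_smul_smul]⟩

lemma strongCompat_adj_height_ne (hmono : ∀ (g : G) (x y : P), x ≤ y → g • x ≤ g • y)
    (hfin : ∀ x : P, height x ≠ ⊤) {x y : P} (hxy : (strongCompat G P).Adj x y) :
    height x ≠ height y := by
  rw [strongCompat, SimpleGraph.fromRel_adj] at hxy
  rcases hxy.2 with ⟨hnorb, g, -, hcomp⟩ | ⟨hnorb, g, -, hcomp⟩
  · exact fun h ↦
      hnorb (exists_smul_eq_of_comparable_smul_of_height_eq hmono hcomp h (hfin x))
  · exact fun h ↦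
      hnorb (exists_smul_eq_of_comparable_smul_of_height_eq hmono hcomp h.symm (hfin y))

end MonotoneAction

theorem chromatic_strongCompat_le_dim_add_one_general
    (G P : Type*) [Group G] [PartialOrder P] [MulAction G P]
    (hmono : ∀ (g : G) (x y : P), x ≤ y → g • x ≤ g • y)
    (d : ℕ)
    (hdim : ∀ l : List P, l.Chain' (· < ·) → l.length ≤ d + 1) :
    (strongCompat G P).chromaticNumber ≤ ((d + 1 : ℕ) : ℕ∞) := by
  have hd := height_le_of_forall_chain_length_le hdim
  have hfin (x : P) : height x ≠ ⊤ := ne_top_of_le_ne_top (ENat.natCast_ne_top d) (hd x)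
  exact (SimpleGraph.colorable_of_adj_height_ne _ hd
    fun _ _ ↦ strongCompat_adj_height_ne hmono hfin).chromaticNumber_le

/-- If a finite group `G` acts on a finite poset `P` preserving the order, then the
chromatic number of the strong compatibility graph is at most `dim P + 1`, where the
dimension is the maximal length of a chain (every chain has at most `d + 1` elements). -/
theorem chromatic_strongCompat_le_dim_add_one
    (G P : Type*) [Group G] [Fintype G] [PartialOrder P] [Fintype P] [MulAction G P]
    (hmono : ∀ (g : G) (x y : P), x ≤ y → g • x ≤ g • y)
    (d : ℕ)
    (hdim : ∀ l : List P, l.Chain' (· < ·) → l.length ≤ d + 1) :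
    (strongCompat G P).chromaticNumber ≤ ((d + 1 : ℕ) : ℕ∞) :=
  chromatic_strongCompat_le_dim_add_one_general G P hmono d hdim
end

section
/- Let $G$ be a finite group acting freely and order-preservingly on a finite poset $P$ (i.e., $g\cdot x = x$ implies $g = e$). If $c : P \to [m]$ is a proper coloring of the strong compatibility graph $\widetilde{C}_P$, then there exists a map $\lambda : P \to G \times [m]$ that is $G$-equivariant (where $G$ acts on $G \times [m]$ by $h\cdot(g,i) = (hg,i)$), satisfies $\lambda_2(x) = c(x')$ where $x'$ is a fixed representative of the orbit of $x$, and such that whenever $x \prec y$ in $P$ and $\lambda_2(x) = \lambda_2(y)$, then $\lambda_1(x) = \lambda_1(y)$ (equivalently, $\lambda$ induces a simplicial map from the order complex of $P$ to the join complex $\Delta(G \times [m])$ whose simplices are subsets of $G \times [m]$ with pairwise distinct second coordinates). -/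
/-- A proper coloring `c` of the strong compatibility graph of a finite free `G`-poset `P`
with colors in `[m]` induces a `G`-equivariant map `λ : P → G × [m]` whose second
coordinate is the color of the chosen orbit representative, and which is simplicial:
comparable elements with equal second coordinates have equal first coordinates. -/
theorem coloring_induces_equivariant_simplicial_map
    (G P : Type*) [Group G] [Fintype G] [PartialOrder P] [Fintype P] [MulAction G P]
    (hmono : ∀ (g : G) (x y : P), x ≤ y → g • x ≤ g • y)
    (hfree : ∀ (g : G) (x : P), g • x = x → g = 1)
    (m : ℕ) (c : (strongCompat G P).Coloring (Fin m)) :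
    ∃ lam : P → G × Fin m,
      (∀ (g : G) (x : P), lam (g • x) = (g * (lam x).1, (lam x).2)) ∧
      (∃ rep : P → P,
        (∀ x : P, ∃ g : G, g • x = rep x) ∧
        (∀ x y : P, (∃ g : G, g • x = y) → rep x = rep y) ∧
        (∀ x : P, (lam x).2 = c (rep x))) ∧
      (∀ x y : P, x < y → (lam x).2 = (lam y).2 → (lam x).1 = (lam y).1) := by
  classical
  set rep : P → P := fun x => (Quotient.mk (MulAction.orbitRel G P) x).out with hrepdef
  have hrepmem : ∀ x : P, ∃ g : G, g • x = rep x := by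
    intro x
    have h : (MulAction.orbitRel G P).r ((Quotient.mk (MulAction.orbitRel G P) x).out) x :=
      @Quotient.exact _ (MulAction.orbitRel G P) _ _ (Quotient.out_eq _)
    exact MulAction.mem_orbit_iff.mp h
  have hrepmem' : ∀ x : P, ∃ g : G, g • rep x = x := by
    intro x
    obtain ⟨g, hg⟩ := hrepmem x
    exact ⟨g⁻¹, by rw [← hg, inv_smul_smul]⟩
  have hrepinv : ∀ x y : P, (∃ g : G, g • x = y) → rep x = rep y := by
    intro x y hxy
    obtain ⟨g, hg⟩ := hxy
    have hxy' : (MulAction.orbitRel G P).r x y :=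
      MulAction.mem_orbit_iff.mpr ⟨g⁻¹, by rw [← hg, inv_smul_smul]⟩
    have : Quotient.mk (MulAction.orbitRel G P) x = Quotient.mk (MulAction.orbitRel G P) y :=
      Quotient.sound hxy'
    simp only [hrepdef, this]
  have hrepfix : ∀ x : P, rep (rep x) = rep x := by
    intro x
    simp only [hrepdef, Quotient.out_eq]
  have huniq : ∀ (a : P) (g g' : G), g • a = g' • a → g = g' := by
    intro a g g' h
    have h1 : (g'⁻¹ * g) • a = a := by rw [mul_smul, h, inv_smul_smul]
    have h2 := hfree _ _ h1
    have h3 : g' * (g'⁻¹ * g) = g' * 1 := by rw [h2]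
    simpa [mul_assoc] using h3
  have hsm : ∀ (g : G) (u v : P), u < v → g • u < g • v := by
    intro g u v huv
    refine lt_of_le_of_ne (hmono g u v huv.le) fun he => huv.ne ?_
    have := congrArg (fun z => g⁻¹ • z) he
    simpa [inv_smul_smul] using this
  have key : ∀ (h : G) (a : P), a < h • a → False := by
    intro h a hlt
    have hle : ∀ n : ℕ, a ≤ h ^ n • a := by
      intro n
      induction n with
      | zero => simp
      | succ n ih =>
        calc a ≤ h • a := hlt.le
        _ ≤ h • (h ^ n • a) := hmono h _ _ ih
        _ = h ^ (n + 1) • a := by rw [← mul_smul, ← pow_succ']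
    have hk : 1 ≤ orderOf h := orderOf_pos h
    have hfin : a < h ^ orderOf h • a := by
      calc a < h • a := hlt
      _ ≤ h • (h ^ (orderOf h - 1) • a) := hmono h _ _ (hle _)
      _ = h ^ orderOf h • a := by
          rw [← mul_smul, ← pow_succ', Nat.sub_add_cancel hk]
    rw [pow_orderOf_eq_one, one_smul] at hfin
    exact lt_irrefl a hfin
  set gf : P → G := fun x => Classical.choose (hrepmem' x) with hgfdef
  have hgf : ∀ x : P, gf x • rep x = x := fun x => Classical.choose_spec (hrepmem' x)
  refine ⟨fun x => (gf x, c (rep x)), ?_, ⟨rep, hrepmem, hrepinv, fun x => rfl⟩, ?_⟩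
  · intro g x
    have hrepg : rep (g • x) = rep x := (hrepinv x (g • x) ⟨g, rfl⟩).symm
    have heq : gf (g • x) • rep (g • x) = (g * gf x) • rep (g • x) := by
      rw [hgf (g • x), hrepg, mul_smul, hgf x]
    have := huniq _ _ _ heq
    simp only [this, hrepg]
  · intro x y hxy hcol
    have hcol' : c (rep x) = c (rep y) := hcol
    show gf x = gf y
    by_contra hne
    set a := rep x with ha
    set b := rep y with hb
    set h := (gf x)⁻¹ * gf y with hh
    have hab : a < h • b := by
      have h1 : gf x • a < gf y • b := by rw [hgf x, hgf y]; exact hxy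
      have h2 := hsm (gf x)⁻¹ _ _ h1
      rwa [inv_smul_smul, ← mul_smul] at h2
    by_cases hab' : a = b
    · exact key h a (by rw [hab'] at hab ⊢; exact hab)
    · have hne1 : h ≠ 1 := by
        intro h1
        rw [hh] at h1
        exact hne (inv_mul_eq_one.mp h1)
      have hnoorb : ¬ ∃ g : G, g • a = b := by
        rintro ⟨g, hg⟩
        have := hrepinv a b ⟨g, hg⟩
        rw [ha, hb, hrepfix x, hrepfix y] at this
        exact hab' this
      have hadj : (strongCompat G P).Adj a b := by
        rw [strongCompat, SimpleGraph.fromRel_adj]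
        exact ⟨hab', Or.inl ⟨hnoorb, h, hne1, Or.inl hab.le⟩⟩
      exact c.valid hadj hcol'
end

section
/- Let $G$ be a finite group and $n \geq 1$. Consider the poset $R = G \times [n]$ with order $(g,x) \prec_2 (h,y)$ iff $g = h$ and $x < y$, and $G$-action $h\cdot(g,i)=(hg,i)$. Then the chromatic number of the strong compatibility graph $\widetilde{C}_R$ equals $\min\{|G|, n\}$. -/
/-- The poset `R = G × [n]` with the order `(g, x) ≺₂ (h, y)` iff `g = h` and `x < y`,
i.e. `(g, x) ⪯₂ (h, y)` iff `g = h` and `x ≤ y`. -/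
def ord2 (G : Type*) (n : ℕ) : PartialOrder (G × Fin n) where
  le a b := a.1 = b.1 ∧ a.2 ≤ b.2
  le_refl a := ⟨rfl, le_refl _⟩
  le_trans a b c hab hbc := ⟨hab.1.trans hbc.1, hab.2.trans hbc.2⟩
  le_antisymm a b hab hba := Prod.ext hab.1 (le_antisymm hab.2 hba.2)

/-- The strong compatibility graph of the `G`-poset `(G × [n], ≺₂)` with action
`h • (g, i) = (h * g, i)`. -/
def strongCompatGraph2 (G : Type*) [Group G] (n : ℕ) : SimpleGraph (G × Fin n) :=
  letI := ord2 G n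
  SimpleGraph.fromRel (fun x y =>
    (¬ ∃ g : G, (g * x.1, x.2) = y) ∧
    ∃ g : G, g ≠ 1 ∧ (x ≤ (g * y.1, y.2) ∨ (g * y.1, y.2) ≤ x))

/-!
Two points of `G × [n]` are adjacent in the strong compatibility graph exactly when they differ
in both coordinates, so the graph is the tensor product `K_G × K_n` of two complete graphs.
Either projection is a proper coloring, and `m = min |G| n` points `(gᵢ, i)` with distinct `gᵢ`
form a clique.
-/

/-- The tensor (categorical) product of the complete graphs on `α` and `β`. -/
def tensorCompleteGraph (α β : Type*) : SimpleGraph (α × β) where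
  Adj x y := x.1 ≠ y.1 ∧ x.2 ≠ y.2
  symm := ⟨fun _ _ h => ⟨h.1.symm, h.2.symm⟩⟩
  loopless := ⟨fun _ h => h.1 rfl⟩

@[simp]
theorem tensorCompleteGraph_adj {α β : Type*} {x y : α × β} :
    (tensorCompleteGraph α β).Adj x y ↔ x.1 ≠ y.1 ∧ x.2 ≠ y.2 :=
  Iff.rfl

namespace tensorCompleteGraph

variable {α β : Type*}

theorem colorable_card_left [Fintype α] :
    (tensorCompleteGraph α β).Colorable (Fintype.card α) :=
  (SimpleGraph.Coloring.mk Prod.fst fun h => (tensorCompleteGraph_adj.1 h).1).colorable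

theorem colorable_card_right [Fintype β] :
    (tensorCompleteGraph α β).Colorable (Fintype.card β) :=
  (SimpleGraph.Coloring.mk Prod.snd fun h => (tensorCompleteGraph_adj.1 h).2).colorable

theorem le_chromaticNumber_of_le_card [Fintype α] [Fintype β] {m : ℕ}
    (hα : m ≤ Fintype.card α) (hβ : m ≤ Fintype.card β) :
    (m : ℕ∞) ≤ (tensorCompleteGraph α β).chromaticNumber := by
  let f : Fin m ↪ α := (Fin.castLEEmb hα).trans (Fintype.equivFin α).symm.toEmbedding
  let g : Fin m ↪ β := (Fin.castLEEmb hβ).trans (Fintype.equivFin β).symm.toEmbedding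
  refine SimpleGraph.le_chromaticNumber_of_pairwise_adj (Nat.card_fin m).ge
    (fun i => (f i, g i)) fun i j hij => ?_
  exact tensorCompleteGraph_adj.2 ⟨f.injective.ne hij, g.injective.ne hij⟩

theorem chromaticNumber_eq [Fintype α] [Fintype β] :
    (tensorCompleteGraph α β).chromaticNumber
      = ((min (Fintype.card α) (Fintype.card β) : ℕ) : ℕ∞) := by
  refine le_antisymm ?_ (le_chromaticNumber_of_le_card (min_le_left _ _) (min_le_right _ _))
  rw [SimpleGraph.chromaticNumber_le_iff_colorable]
  rcases le_total (Fintype.card α) (Fintype.card β) with h | h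
  · simpa [min_eq_left h] using colorable_card_left
  · simpa [min_eq_right h] using colorable_card_right

end tensorCompleteGraph

section strongCompatGraph2

variable {G : Type*} [Group G] {n : ℕ}

theorem exists_mul_fst_eq_iff (x y : G × Fin n) :
    (∃ g : G, (g * x.1, x.2) = y) ↔ x.2 = y.2 :=
  ⟨fun ⟨_, h⟩ => h ▸ rfl, fun h => ⟨y.1 * x.1⁻¹, Prod.ext (by simp) h⟩⟩

/-- The only candidate is `g = x.1 * y.1⁻¹`, and it works since `[n]` is totally ordered. -/
theorem exists_ne_one_comparable_iff (x y : G × Fin n) :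
    (∃ g : G, g ≠ 1 ∧
      ((ord2 G n).le x (g * y.1, y.2) ∨ (ord2 G n).le (g * y.1, y.2) x)) ↔ x.1 ≠ y.1 := by
  constructor
  · rintro ⟨g, hg, ⟨hxy, -⟩ | ⟨hxy, -⟩⟩ <;> rintro hx
    · exact hg (by simpa [hx] using hxy)
    · exact hg (by simpa [hx] using hxy)
  · intro hx
    refine ⟨x.1 * y.1⁻¹, mul_inv_eq_one.not.mpr hx, ?_⟩
    rcases le_total x.2 y.2 with h | h
    · exact Or.inl ⟨by simp, h⟩
    · exact Or.inr ⟨by simp, h⟩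

theorem strongCompatGraph2_eq : strongCompatGraph2 G n = tensorCompleteGraph G (Fin n) := by
  ext x y
  simp only [strongCompatGraph2, SimpleGraph.fromRel_adj, exists_mul_fst_eq_iff,
    exists_ne_one_comparable_iff]
  rw [tensorCompleteGraph_adj]
  constructor
  · rintro ⟨-, ⟨h2, h1⟩ | ⟨h2, h1⟩⟩
    · exact ⟨h1, h2⟩
    · exact ⟨Ne.symm h1, Ne.symm h2⟩
  · rintro ⟨h1, h2⟩
    exact ⟨fun h => h1 (congrArg Prod.fst h), Or.inl ⟨h2, h1⟩⟩

end strongCompatGraph2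

theorem chromatic_strongCompatGraph2_general
    (G : Type*) [Group G] [Fintype G] (n : ℕ) :
    (strongCompatGraph2 G n).chromaticNumber
      = ((min (Fintype.card G) n : ℕ) : ℕ∞) := by
  rw [strongCompatGraph2_eq, tensorCompleteGraph.chromaticNumber_eq, Fintype.card_fin]

/-- The chromatic number of the strong compatibility graph of `(G × [n], ≺₂)` equals
`min (|G|, n)`. -/
theorem chromatic_strongCompatGraph2
    (G : Type*) [Group G] [Fintype G] (n : ℕ) (hn : 1 ≤ n) :
    (strongCompatGraph2 G n).chromaticNumber
      = ((min (Fintype.card G) n : ℕ) : ℕ∞) :=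
  chromatic_strongCompatGraph2_general G n
end

section
/- Let $r \geq 3$ and $n \geq 3$. Define $\mathrm{Hom}_p(C_r, K_n)$ as the poset of $r$-tuples $(A_1,\dots,A_r)$ of nonempty subsets of $[n]$ such that $A_i \cap A_{i+1} = \emptyset$ for $1 \leq i \leq r-1$ and $A_1 \cap A_r = \emptyset$, ordered componentwise by inclusion, with $\mathbb{Z}_2$-action $\omega\cdot(A_1,\dots,A_r) = (A_r, A_{r-1}, \dots, A_1)$. Then the map assigning to each tuple $(A_1,\dots,A_r)$ the minimum element of $A_1$ is a proper coloring of the strong compatibility graph $\widetilde{C}_{\mathrm{Hom}_p(C_r,K_n)}$ with at most $n$ colors; hence $\chi(\widetilde{C}_{\mathrm{Hom}_p(C_r,K_n)}) \leq n$. -/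
/-- The poset `Hom_p(C_r, K_n)`: `r`-tuples of nonempty subsets of `[n]` assigning
disjoint sets to cyclically adjacent indices, ordered componentwise by inclusion.
(The index `i + 1` is taken cyclically in `Fin r`, so the condition includes
`A_1 ∩ A_r = ∅`.) -/
def CycHom (r n : ℕ) [NeZero r] : Type :=
  {A : Fin r → Finset (Fin n) //
    (∀ i, (A i).Nonempty) ∧ ∀ i : Fin r, Disjoint (A i) (A (i + 1))}

/-- The strong compatibility graph of `Hom_p(C_r, K_n)` with the `ℤ₂`-action
`ω • (A₁, …, A_r) = (A_r, …, A₁)` (i.e. precomposition with `Fin.rev`):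
`A, B` adjacent iff `B ∉ {A, ω • A}` and `A` is comparable with `ω • B`. -/
def strongCompatCyc (r n : ℕ) [NeZero r] : SimpleGraph (CycHom r n) :=
  SimpleGraph.fromRel (fun A B =>
    (B.val ≠ A.val ∧ B.val ≠ fun i => A.val (Fin.rev i)) ∧
    ((∀ i, A.val i ⊆ B.val (Fin.rev i)) ∨ (∀ i, B.val (Fin.rev i) ⊆ A.val i)))

lemma rev_zero_add_one (r : ℕ) [NeZero r] : Fin.rev (0 : Fin r) + 1 = 0 := by
  have hr : 0 < r := Nat.pos_of_ne_zero (NeZero.ne r)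
  apply Fin.ext
  simp [Fin.rev, Fin.add_def, Nat.sub_add_cancel hr]

lemma disj_of_adj (r n : ℕ) [NeZero r] (A B : CycHom r n)
    (h : (strongCompatCyc r n).Adj A B) : Disjoint (A.val 0) (B.val 0) := by
  obtain ⟨-, h⟩ := h
  have hA : Disjoint (A.val (Fin.rev 0)) (A.val 0) := by
    have := A.prop.2 (Fin.rev 0); rwa [rev_zero_add_one] at this
  have hB : Disjoint (B.val (Fin.rev 0)) (B.val 0) := by
    have := B.prop.2 (Fin.rev 0); rwa [rev_zero_add_one] at this
  rcases h with ⟨-, h | h⟩ | ⟨-, h | h⟩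
  · exact hB.mono_left (h 0)
  · have := h (Fin.rev 0)
    rw [Fin.rev_rev] at this
    exact (hA.mono_left this).symm
  · exact hA.symm.mono_right (h 0)
  · have := h (Fin.rev 0)
    rw [Fin.rev_rev] at this
    exact (hB.symm.mono_right this).symm

/-- For `r ≥ 3`, `n ≥ 3`, the map sending `(A₁, …, A_r)` to the minimum element of
`A₁` is a proper coloring of the strong compatibility graph of `Hom_p(C_r, K_n)` with
at most `n` colors; hence its chromatic number is at most `n`. -/
theorem strongCompatCyc_coloring (r n : ℕ) [NeZero r] (hr : 3 ≤ r) (hn : 3 ≤ n) :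
    (∀ A B : CycHom r n, (strongCompatCyc r n).Adj A B →
        (A.val 0).min' (A.prop.1 0) ≠ (B.val 0).min' (B.prop.1 0)) ∧
      (strongCompatCyc r n).chromaticNumber ≤ (n : ℕ∞) := by
  have key : ∀ A B : CycHom r n, (strongCompatCyc r n).Adj A B →
      (A.val 0).min' (A.prop.1 0) ≠ (B.val 0).min' (B.prop.1 0) := by
    intro A B h heq
    have hd := disj_of_adj r n A B h
    have hmemA := (A.val 0).min'_mem (A.prop.1 0)
    have hmemB := (B.val 0).min'_mem (B.prop.1 0)
    rw [heq] at hmemA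
    exact Finset.disjoint_left.mp hd hmemA hmemB
  refine ⟨key, ?_⟩
  have : (strongCompatCyc r n).Colorable n := by
    exact ⟨SimpleGraph.Coloring.mk (fun A => (A.val 0).min' (A.prop.1 0))
      (fun {A B} h => key A B h)⟩
  exact this.chromaticNumber_le
end

section
/- For $r \geq 3$ even and $n \geq 3$, the poset $\mathrm{Hom}_p(C_r, K_n)$ of $r$-tuples $(A_1,\dots,A_r)$ of nonempty subsets of $[n]$ with $A_i \cap A_{i+1} = \emptyset$ (indices mod $r$), ordered componentwise by inclusion, contains a chain of length at least $\frac{r}{2}(n-2)$; hence $\dim(\mathrm{Hom}_p(C_r,K_n)) \geq \lceil r/2 \rceil (n-2)$. -/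
/-!
Keep `{1}` at the odd positions and let every even position `2j` hold `0` together with an
initial segment of `2, 3, …, n-1`. Since `r` is even, adjacent positions have opposite parity, so
every such tuple lies in `Hom_p(C_r, K_n)`. Growing the even positions one block after the other,
one new element per step, gives a strictly increasing chain with `(r/2)(n-2)` steps.
-/

theorem Fin.even_val_add_one_iff {r : ℕ} [NeZero r] (hr : Even r) (i : Fin r) :
    Even (i + 1 : Fin r).val ↔ ¬Even i.val := by
  rw [Fin.val_add, Fin.val_one', hr.mod_even_iff, Nat.even_add, hr.mod_even_iff]
  simp

section Staircase

variable {n : ℕ}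

/-- Block `j` at time `k`: element `x ≥ 2` enters it at time `j * (n - 2) + (x - 2)`, so block `j`
grows during the steps `j(n-2), …, (j+1)(n-2) - 1` and is constant otherwise. -/
def stairBlock (j k : ℕ) : Finset (Fin n) :=
  {x | x.val = 0 ∨ 2 ≤ x.val ∧ j * (n - 2) + x.val < k + 2}

theorem stairBlock_mono (j : ℕ) : Monotone (stairBlock (n := n) j) := by
  intro k k' hk x
  simp only [stairBlock, Finset.mem_filter, Finset.mem_univ, true_and]
  omega

theorem stairBlock_nonempty (hn : 0 < n) (j k : ℕ) : (stairBlock (n := n) j k).Nonempty :=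
  ⟨⟨0, hn⟩, by simp [stairBlock]⟩

theorem not_mem_stairBlock_of_val_eq_one {x : Fin n} (hx : x.val = 1) (j k : ℕ) :
    x ∉ stairBlock j k := by
  simp [stairBlock, hx]

theorem stairBlock_ne_succ {j k : ℕ} (hjk : j * (n - 2) ≤ k) (hkj : k < (j + 1) * (n - 2)) :
    stairBlock (n := n) j k ≠ stairBlock j (k + 1) := by
  have hx : k - j * (n - 2) + 2 < n := by rw [Nat.succ_mul] at hkj; omega
  intro h
  have hmem : (⟨k - j * (n - 2) + 2, hx⟩ : Fin n) ∈ stairBlock j (k + 1) := by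
    simp only [stairBlock, Finset.mem_filter, Finset.mem_univ, true_and]; omega
  rw [← h] at hmem
  simp only [stairBlock, Finset.mem_filter, Finset.mem_univ, true_and] at hmem
  omega

variable {r : ℕ}

def staircase (hn : 1 < n) (k : ℕ) (i : Fin r) : Finset (Fin n) :=
  if Even i.val then stairBlock (i.val / 2) k else {⟨1, hn⟩}

theorem staircase_nonempty (hn : 1 < n) (k : ℕ) (i : Fin r) : (staircase hn k i).Nonempty := by
  unfold staircase
  split_ifs
  · exact stairBlock_nonempty (by omega) _ _
  · exact Finset.singleton_nonempty _

theorem staircase_disjoint_succ [NeZero r] (hr : Even r) (hn : 1 < n) (k : ℕ) (i : Fin r) :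
    Disjoint (staircase hn k i) (staircase hn k (i + 1)) := by
  have hpar := Fin.even_val_add_one_iff hr i
  unfold staircase
  split_ifs <;> try tauto
  · exact Finset.disjoint_singleton_right.2 (not_mem_stairBlock_of_val_eq_one rfl _ _)
  · exact Finset.disjoint_singleton_left.2 (not_mem_stairBlock_of_val_eq_one rfl _ _)

theorem staircase_mono (hn : 1 < n) {k k' : ℕ} (hk : k ≤ k') (i : Fin r) :
    staircase hn k i ⊆ staircase hn k' i := by
  unfold staircase
  split_ifs
  · exact stairBlock_mono _ hk
  · exact subset_rfl

theorem staircase_ne_succ (hn : 1 < n) {k : ℕ} (hk : k < r / 2 * (n - 2)) :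
    staircase (r := r) hn k ≠ staircase hn (k + 1) := by
  have hm : 0 < n - 2 := Nat.pos_of_ne_zero fun h => by simp [h] at hk
  set j := k / (n - 2)
  have hjk : j * (n - 2) ≤ k := Nat.div_mul_le_self k (n - 2)
  have hkj : k < (j + 1) * (n - 2) := by
    rw [Nat.succ_mul]; have := Nat.lt_div_mul_add (a := k) hm; omega
  have hjr : 2 * j < r := by
    have : j < r / 2 := (Nat.div_lt_iff_lt_mul hm).2 hk
    omega
  intro h
  have hblock := congrFun h ⟨2 * j, hjr⟩
  simp only [staircase, even_two_mul, if_true, Nat.mul_div_cancel_left j two_pos] at hblock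
  exact stairBlock_ne_succ hjk hkj hblock

def staircaseHom [NeZero r] (hr : Even r) (hn : 1 < n) (k : ℕ) : CycHom r n :=
  ⟨staircase hn k, staircase_nonempty hn k, staircase_disjoint_succ hr hn k⟩

end Staircase

theorem cycHom_long_chain_general (r n : ℕ) [NeZero r] (hreven : Even r)
    (hn : 3 ≤ n) :
    ∃ l : List (CycHom r n),
      l.Chain' (fun A B => (∀ i, A.val i ⊆ B.val i) ∧ A.val ≠ B.val) ∧
      r / 2 * (n - 2) + 1 ≤ l.length := by
  refine ⟨(List.range (r / 2 * (n - 2) + 1)).map (staircaseHom hreven (by omega)), ?_, by simp⟩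
  refine List.isChain_map _ |>.2 <| (List.isChain_range_succ _ _).2 fun k hk => ?_
  exact ⟨staircase_mono _ k.le_succ, staircase_ne_succ _ hk⟩

/-- For `r ≥ 3` even and `n ≥ 3`, the poset `Hom_p(C_r, K_n)` contains a chain of
length at least `(r/2)(n-2)`, i.e. a strictly increasing list of at least
`(r/2)(n-2) + 1` elements; hence `dim Hom_p(C_r, K_n) ≥ ⌈r/2⌉(n-2)`. -/
theorem cycHom_long_chain (r n : ℕ) [NeZero r] (hr : 3 ≤ r) (hreven : Even r)
    (hn : 3 ≤ n) :
    ∃ l : List (CycHom r n),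
      l.Chain' (fun A B => (∀ i, A.val i ⊆ B.val i) ∧ A.val ≠ B.val) ∧
      r / 2 * (n - 2) + 1 ≤ l.length :=
  cycHom_long_chain_general r n hreven hn
end

section
/- Let $P$ be a poset with a free order-preserving action of $\mathbb{Z}_2 = \{+1,-1\}$ (write $-y$ for the action of $-1$ on $y$). The compatibility graph $C_P$ (vertices $P$, with $x,y$ adjacent iff $x$ and $-y$ are comparable) contains a triangle if and only if there exist $x, y \in P$ with $x \preceq y$ and $x \preceq -y$. -/
/-- For a free `ℤ₂`-poset `P` (an order-preserving fixed-point-free involution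
`x ↦ -x`), the compatibility graph (distinct `x, y` adjacent iff `x` and `-y` are
comparable) contains a triangle if and only if there are `x, y` with `x ≤ y` and
`x ≤ -y`. -/
theorem compat_triangle_iff
    (P : Type*) [PartialOrder P] (neg : P → P)
    (hinv : Function.Involutive neg)
    (hmono : ∀ x y : P, x ≤ y → neg x ≤ neg y)
    (hfree : ∀ x : P, neg x ≠ x) :
    (¬ (SimpleGraph.fromRel
          (fun x y : P => x ≤ neg y ∨ neg y ≤ x)).CliqueFree 3) ↔
      ∃ x y : P, x ≤ y ∧ x ≤ neg y := by
  classical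
  have flip : ∀ u v : P, u ≤ neg v → neg u ≤ v := fun u v h => by
    have := hmono u (neg v) h; rwa [hinv] at this
  have flip2 : ∀ u v : P, neg u ≤ v → u ≤ neg v := fun u v h => by
    have := hmono (neg u) v h; rwa [hinv] at this
  constructor
  · intro h
    rw [SimpleGraph.CliqueFree] at h
    push_neg at h
    obtain ⟨s, hs⟩ := h
    rw [SimpleGraph.is3Clique_iff] at hs
    obtain ⟨a, b, c, hab, hac, hbc, -⟩ := hs
    rw [SimpleGraph.fromRel_adj] at hab hac hbc
    have h1 : a ≤ neg b ∨ neg b ≤ a := by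
      rcases hab.2 with (h | h) | (h | h)
      · exact Or.inl h
      · exact Or.inr h
      · exact Or.inr (flip b a h)
      · exact Or.inl (flip2 a b h)
    have h2 : a ≤ neg c ∨ neg c ≤ a := by
      rcases hac.2 with (h | h) | (h | h)
      · exact Or.inl h
      · exact Or.inr h
      · exact Or.inr (flip c a h)
      · exact Or.inl (flip2 a c h)
    have h3 : b ≤ neg c ∨ neg c ≤ b := by
      rcases hbc.2 with (h | h) | (h | h)
      · exact Or.inl h
      · exact Or.inr h
      · exact Or.inr (flip c b h)
      · exact Or.inl (flip2 b c h)
    rcases h1 with h1 | h1 <;> rcases h2 with h2 | h2 <;> rcases h3 with h3 | h3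
    · exact ⟨a, c, le_trans h1 (flip b c h3), h2⟩
    · exact ⟨a, b, le_trans h2 h3, h1⟩
    · exact ⟨neg a, a, le_trans (flip a b h1) (le_trans h3 h2), le_refl _⟩
    · exact ⟨neg c, b, h3, le_trans h2 h1⟩
    · exact ⟨neg b, c, flip b c h3, le_trans h1 h2⟩
    · exact ⟨neg b, b, le_trans h1 (le_trans h2 h3), le_refl _⟩
    · exact ⟨b, a, le_trans h3 h2, flip2 b a h1⟩
    · exact ⟨c, a, le_trans (flip2 c b h3) h1, flip2 c a h2⟩
  · rintro ⟨x, y, hxy, hxny⟩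
    have hyny : ¬ (neg y = y) := hfree y
    have hne1 : x ≠ y := by
      rintro rfl
      exact hyny (le_antisymm (flip x x hxny) hxny)
    have hne2 : x ≠ neg y := by
      rintro rfl
      exact hyny (le_antisymm hxy (flip2 y y hxy))
    rw [SimpleGraph.CliqueFree]
    push_neg
    refine ⟨{x, y, neg y}, ?_⟩
    rw [SimpleGraph.is3Clique_triple_iff]
    refine ⟨⟨hne1, Or.inl (Or.inl hxny)⟩,
      ⟨hne2, Or.inl (Or.inl ?_)⟩,
      ⟨fun h => hyny h.symm, Or.inl (Or.inl ?_)⟩⟩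
    · rwa [hinv]
    · rw [hinv]
end

section
/- Let $G$ be a nontrivial finite group and let $P$ be a finite free $G$-poset. Then $\mathrm{ind}_G \|\Delta(P)\| + 1 \leq \chi(\widetilde{C}_P)$, where $\mathrm{ind}_G$ is the equivariant index: the least $n$ such that $\|\Delta(P)\|$ admits a continuous $G$-equivariant map to an $\mathbb{E}_n G$ space (the geometric realization of an $(n-1)$-connected free $n$-dimensional simplicial $G$-complex, e.g. the $(n+1)$-fold join $G^{*(n+1)}$). -/
/-- The geometric realization of the order complex `Δ(P)` of a finite poset `P`:
convex combinations of elements of `P` supported on chains. -/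
abbrev Realization (P : Type*) [PartialOrder P] [Fintype P] : Type _ :=
  {w : P → ℝ // (∀ x, 0 ≤ w x) ∧ (∑ x, w x) = 1 ∧ IsChain (· ≤ ·) {x | w x ≠ 0}}

/-- The vertex set `G × [m]` of the `m`-fold join `G^{*m} = Δ(G × [m])`; with the
order `(g, x) ≺₁ (h, y)` iff `x < y`, its realization is an `E_{m-1}G` space. -/
structure JoinVertex (G : Type*) (m : ℕ) where
  g : G
  i : Fin m

instance (G : Type*) (m : ℕ) : PartialOrder (JoinVertex G m) where
  le a b := a = b ∨ a.i < b.i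
  le_refl a := Or.inl rfl
  le_trans a b c hab hbc := by
    rcases hab with rfl | h
    · exact hbc
    · rcases hbc with rfl | h'
      · exact Or.inr h
      · exact Or.inr (h.trans h')
  le_antisymm a b hab hba := by
    rcases hab with rfl | h
    · rfl
    · rcases hba with rfl | h'
      · rfl
      · exact absurd h' (lt_asymm h)

instance (G : Type*) [Fintype G] (m : ℕ) : Fintype (JoinVertex G m) :=
  Fintype.ofEquiv (G × Fin m)
    ⟨fun p => ⟨p.1, p.2⟩, fun v => (v.g, v.i), fun _ => rfl, fun _ => rfl⟩

/-- The equivariant index of (the realization of the order complex of) a finite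
`G`-poset `P`: the least `n` such that there is a continuous `G`-equivariant map
from `‖Δ(P)‖` to the `E_nG` space `‖G^{*(n+1)}‖ = ‖Δ(G × [n+1])‖`. (Here
`g • w` on a realization is `w` precomposed with the action of `g⁻¹`.) -/
noncomputable def indG (G P : Type*) [Group G] [Fintype G] [PartialOrder P]
    [Fintype P] [MulAction G P] : ℕ :=
  sInf {n : ℕ | ∃ Φ : Realization P → Realization (JoinVertex G (n + 1)),
    Continuous Φ ∧
    ∀ (g : G) (x y : Realization P),
      (∀ q : P, y.val q = x.val (g⁻¹ • q)) →
      ∀ p : JoinVertex G (n + 1), (Φ y).val p = (Φ x).val ⟨g⁻¹ * p.g, p.i⟩}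

section Aux

variable {G P : Type*} [Group G] [Fintype G]
    [PartialOrder P] [Fintype P] [MulAction G P]

lemma aux_no_lt_smul (hmono : ∀ (g : G) (x y : P), x ≤ y → g • x ≤ g • y)
    (x : P) (h : G) : ¬ x < h • x := by
  intro hlt
  have key : ∀ k : ℕ, x < h ^ (k + 1) • x := by
    intro k
    induction k with
    | zero => simpa using hlt
    | succ k ih =>
      have h2 : h • x ≤ h • (h ^ (k + 1) • x) := hmono h _ _ ih.le
      have h3 : h • (h ^ (k + 1) • x) = h ^ (k + 2) • x := by
        rw [smul_smul, ← pow_succ']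
      exact lt_of_lt_of_le hlt (h3 ▸ h2)
  have hpos : 0 < orderOf h := orderOf_pos h
  have := key (orderOf h - 1)
  rw [Nat.sub_add_cancel hpos, pow_orderOf_eq_one, one_smul] at this
  exact lt_irrefl _ this

lemma aux_colorable_le (hmono : ∀ (g : G) (x y : P), x ≤ y → g • x ≤ g • y)
    (hfree : ∀ (g : G) (x : P), g • x = x → g = 1)
    (n : ℕ) (C : (strongCompat G P).Coloring (Fin (n + 1))) :
    indG G P ≤ n := by
  classical
  -- orbit representatives
  set r : P → P := fun x => (Quotient.mk (MulAction.orbitRel G P) x).out with hr_def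
  have hmk : ∀ x : P, Quotient.mk (MulAction.orbitRel G P) (r x)
      = Quotient.mk (MulAction.orbitRel G P) x := fun x => Quotient.out_eq _
  have hr : ∀ x : P, ∃ g : G, g • r x = x := by
    intro x
    have h := Quotient.exact (hmk x)
    obtain ⟨g, hg⟩ := (MulAction.orbitRel_apply.mp h)
    exact ⟨g⁻¹, by rw [← hg]; simp⟩
  set gx : P → G := fun x => (hr x).choose with hgx_def
  have hgx : ∀ x : P, gx x • r x = x := fun x => (hr x).choose_spec
  have hgu : ∀ (x : P) (g : G), g • r x = x → g = gx x := by
    intro x g hg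
    have : ((gx x)⁻¹ * g) • r x = r x := by
      rw [mul_smul, hg, inv_smul_eq_iff, hgx]
    have := hfree _ _ this
    rw [inv_mul_eq_one] at this
    exact this.symm
  have hrsmul : ∀ (g : G) (x : P), r (g • x) = r x := by
    intro g x
    have : Quotient.mk (MulAction.orbitRel G P) (g • x)
        = Quotient.mk (MulAction.orbitRel G P) x :=
      Quotient.sound (MulAction.orbitRel_apply.mpr (MulAction.mem_orbit x g))
    simp only [hr_def, this]
  have hgsmul : ∀ (g : G) (x : P), gx (g • x) = g * gx x := by
    intro g x
    refine (hgu (g • x) (g * gx x) ?_).symm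
    rw [hrsmul, mul_smul, hgx]
  -- the vertex map
  set c' : P → Fin (n + 1) := fun x => C (r x) with hc'_def
  set v : P → JoinVertex G (n + 1) := fun x => ⟨gx x, c' x⟩ with hv_def
  have hv_smul : ∀ (g : G) (x : P), v (g • x) = ⟨g * gx x, c' x⟩ := by
    intro g x
    simp only [hv_def, hgsmul, hc'_def, hrsmul]
  -- key combinatorial fact
  have main : ∀ x y : P, x < y → v x = v y ∨ (v x).i ≠ (v y).i := by
    intro x y hxy
    by_cases hc : c' x = c' y
    · left
      suffices hg : gx x = gx y by
        simp only [hv_def, hg, hc]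
      by_contra hne
      by_cases hrr : r x = r y
      · have hx' : (gx x)⁻¹ • x = r x := by rw [inv_smul_eq_iff, hgx]
        have hy : (gx y * (gx x)⁻¹) • x = y := by
          rw [mul_smul, hx', hrr, hgx]
        exact aux_no_lt_smul hmono x (gx y * (gx x)⁻¹) (by rw [hy]; exact hxy)
      · have hx' : (gx x)⁻¹ • x = r x := by rw [inv_smul_eq_iff, hgx]
        have hadj : (strongCompat G P).Adj (r x) (r y) := by
          refine (SimpleGraph.fromRel_adj _ _ _).mpr ⟨hrr, Or.inl ⟨?_, ?_⟩⟩
          · rintro ⟨g, hg⟩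
            apply hrr
            have h1 : (gx y * g) • r x = y := by rw [mul_smul, hg, hgx]
            have hxy' : Quotient.mk (MulAction.orbitRel G P) x
                = Quotient.mk (MulAction.orbitRel G P) y := by
              refine Quotient.sound (MulAction.orbitRel_apply.mpr
                (MulAction.mem_orbit_iff.mpr ⟨gx x * (gx y * g)⁻¹, ?_⟩))
              have h1' : (gx y * g)⁻¹ • y = r x := by rw [inv_smul_eq_iff, h1]
              rw [mul_smul, h1', hgx]
            exact congrArg Quotient.out hxy'
          · refine ⟨(gx x)⁻¹ * gx y, ?_, Or.inl ?_⟩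
            · intro h1
              exact hne (by rwa [inv_mul_eq_one] at h1)
            · have h2 := hmono (gx x)⁻¹ x y hxy.le
              have hy' : (gx x)⁻¹ • y = ((gx x)⁻¹ * gx y) • r y := by
                rw [mul_smul, hgx]
              rw [hx', hy'] at h2
              exact h2
        exact absurd hc (C.valid hadj)
    · right
      exact hc
  -- the equivariant map
  set Φfun : Realization P → (JoinVertex G (n + 1) → ℝ) :=
    fun w p => ∑ z ∈ Finset.univ.filter (fun z => v z = p), w.val z with hΦfun
  have hmem : ∀ w : Realization P, ∀ p, Φfun w p ≠ 0 →
      ∃ z : P, v z = p ∧ w.val z ≠ 0 := by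
    intro w p hp
    obtain ⟨z, hz, hz0⟩ := Finset.exists_ne_zero_of_sum_ne_zero hp
    exact ⟨z, (Finset.mem_filter.mp hz).2, hz0⟩
  have hΦprop : ∀ w : Realization P, (∀ p, 0 ≤ Φfun w p) ∧ (∑ p, Φfun w p) = 1 ∧
      IsChain (· ≤ ·) {p | Φfun w p ≠ 0} := by
    intro w
    refine ⟨fun p => Finset.sum_nonneg fun z _ => w.2.1 z, ?_, ?_⟩
    · rw [hΦfun]
      simpa using (Finset.sum_fiberwise Finset.univ v w.val).trans w.2.2.1
    · intro p hp q hq hpq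
      obtain ⟨z, hzv, hz0⟩ := hmem w p hp
      obtain ⟨u, huv, hu0⟩ := hmem w q hq
      have hzu : z ≠ u := fun h => hpq (by rw [← hzv, ← huv, h])
      have hcomp := w.2.2.2 hz0 hu0 hzu
      have hstep : ∀ a b : P, a < b → v a ≤ v b ∨ v b ≤ v a := by
        intro a b hab
        rcases main a b hab with h | h
        · exact Or.inl (Or.inl h)
        · rcases lt_or_gt_of_ne (fun he => h (Fin.ext (by exact_mod_cast congrArg Fin.val he))) with h' | h'
          · exact Or.inl (Or.inr h')
          · exact Or.inr (Or.inr h')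
      rcases hcomp with h | h
      · rcases hstep z u (lt_of_le_of_ne h hzu) with h' | h'
        · exact Or.inl (hzv ▸ huv ▸ h')
        · exact Or.inr (hzv ▸ huv ▸ h')
      · rcases hstep u z (lt_of_le_of_ne h (Ne.symm hzu)) with h' | h'
        · exact Or.inr (hzv ▸ huv ▸ h')
        · exact Or.inl (hzv ▸ huv ▸ h')
  refine Nat.sInf_le ⟨fun w => ⟨Φfun w, hΦprop w⟩, ?_, ?_⟩
  · refine Continuous.subtype_mk ?_ _
    refine continuous_pi fun p => ?_
    exact continuous_finset_sum _ fun z _ => (continuous_apply z).comp continuous_subtype_val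
  · intro g x y hxy p
    show Φfun y p = Φfun x ⟨g⁻¹ * p.g, p.i⟩
    rw [hΦfun]
    simp only [Finset.sum_filter]
    have hre : ∀ z : P, y.val z = x.val (g⁻¹ • z) := hxy
    calc (∑ z, if v z = p then y.val z else 0)
        = ∑ z, if v z = p then x.val (g⁻¹ • z) else 0 := by
          refine Finset.sum_congr rfl fun z _ => by rw [hre z]
      _ = ∑ u, if v (g • u) = p then x.val (g⁻¹ • (g • u)) else 0 :=
          (Equiv.sum_comp (MulAction.toPerm g)
            (fun z => if v z = p then x.val (g⁻¹ • z) else 0)).symm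
      _ = ∑ u, if v u = ⟨g⁻¹ * p.g, p.i⟩ then x.val u else 0 := by
          refine Finset.sum_congr rfl fun u _ => ?_
          rw [inv_smul_smul]
          refine if_congr ?_ rfl rfl
          rw [hv_smul g u]
          obtain ⟨pg, pi⟩ := p
          simp only [hv_def, JoinVertex.mk.injEq]
          constructor
          · rintro ⟨h1, h2⟩
            exact ⟨by rw [← h1]; group, h2⟩
          · rintro ⟨h1, h2⟩
            exact ⟨by rw [h1]; group, h2⟩
end Aux

/-- For a nontrivial finite group `G` and a finite free `G`-poset `P`,
`ind_G ‖Δ(P)‖ + 1 ≤ χ(C̃_P)`. -/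
theorem indG_add_one_le_chromatic_strongCompat
    (G P : Type*) [Group G] [Fintype G] [Nontrivial G]
    [PartialOrder P] [Fintype P] [Nonempty P] [MulAction G P]
    (hmono : ∀ (g : G) (x y : P), x ≤ y → g • x ≤ g • y)
    (hfree : ∀ (g : G) (x : P), g • x = x → g = 1) :
    ((indG G P + 1 : ℕ) : ℕ∞) ≤ (strongCompat G P).chromaticNumber := by
  cases hχ : (strongCompat G P).chromaticNumber with
  | top => exact le_top
  | coe m =>
    have hcol : (strongCompat G P).Colorable m := by
      rw [← SimpleGraph.chromaticNumber_le_iff_colorable, hχ]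
    obtain ⟨C⟩ := hcol
    obtain ⟨x⟩ := (inferInstance : Nonempty P)
    have hm : m ≠ 0 := by
      rintro rfl
      exact (C x).elim0
    obtain ⟨n, rfl⟩ := Nat.exists_eq_succ_of_ne_zero hm
    have := aux_colorable_le hmono hfree n C
    exact_mod_cast Nat.succ_le_succ this
end

section
/- Let $\mathcal{K}$ be a finite free simplicial $\mathbb{Z}_2$-complex triangulating the $n$-sphere (so $\|\mathcal{K}\| \cong \mathbb{S}^n$ equivariantly with the antipodal-type free action, $\mathrm{ind}_{\mathbb{Z}_2}\|\mathcal{K}\| = n$, and $\dim \mathcal{K} = n$). Then the strong compatibility graph $\widetilde{C}_{P(\mathcal{K})}$ of the face poset of $\mathcal{K}$ is triangle-free and has chromatic number exactly $n+1$. -/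
/-- Vertex set of the `m`-fold join `ℤ₂^{*m}` (with `ℤ₂` modelled by `Bool`),
ordered by `(g, x) ≺₁ (h, y)` iff `x < y`; its realization is an `E_{m-1}ℤ₂` space. -/
structure JoinVertex2 (m : ℕ) where
  b : Bool
  i : Fin m

instance (m : ℕ) : PartialOrder (JoinVertex2 m) where
  le a b := a = b ∨ a.i < b.i
  le_refl a := Or.inl rfl
  le_trans a b c hab hbc := by
    rcases hab with rfl | h
    · exact hbc
    · rcases hbc with rfl | h'
      · exact Or.inr h
      · exact Or.inr (h.trans h')
  le_antisymm a b hab hba := by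
    rcases hab with rfl | h
    · rfl
    · rcases hba with rfl | h'
      · rfl
      · exact absurd h' (lt_asymm h)

instance (m : ℕ) : Fintype (JoinVertex2 m) :=
  Fintype.ofEquiv (Bool × Fin m)
    ⟨fun p => ⟨p.1, p.2⟩, fun v => (v.b, v.i), fun _ => rfl, fun _ => rfl⟩

/-- The `ℤ₂`-index of (the realization of the order complex of) a finite poset `X`
with involution `ν`: the least `n` admitting a continuous `ℤ₂`-equivariant map to
the `E_nℤ₂` space `‖Δ(ℤ₂ × [n+1])‖`. -/
noncomputable def indZ2 (X : Type*) [PartialOrder X] [Fintype X] (ν : X → X) : ℕ :=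
  sInf {n : ℕ | ∃ Φ : Realization X → Realization (JoinVertex2 (n + 1)),
    Continuous Φ ∧
    ∀ x y : Realization X,
      (∀ q : X, y.val q = x.val (ν q)) →
      ∀ p : JoinVertex2 (n + 1), (Φ y).val p = (Φ x).val ⟨!p.b, p.i⟩}

/-- The involution on the face poset of a complex `K` induced by a vertex involution. -/
def negFace {V : Type*} [DecidableEq V] (neg : V → V) (K : Finset (Finset V))
    (hact : ∀ s ∈ K, s.image neg ∈ K) : {s // s ∈ K} → {s // s ∈ K} :=
  fun s => ⟨s.1.image neg, hact s.1 s.2⟩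

/-!
In a triangle of the strong compatibility graph the three comparabilities `σ ⊆ -τ` or
`-τ ⊆ σ` compose to a face lying below both some `τ` and `-τ` (or above both), impossible for
nonempty faces disjoint from their antipodes. Colouring faces by dimension gives `χ ≤ n + 1`.

Conversely, a colouring `c` with `m` colours yields a `ℤ₂`-map `‖Δ(P)‖ → E_{m-1}ℤ₂`. Label a
chain by the largest orbit colour `max (c x) (c (-x))` on it, together with the side of the
orbit carrying it. Since `x < y` makes `x` adjacent to `-y` and `-x` to `y`, this label is
monotone and equivariant on the barycentric subdivision, and a point of `‖Δ(P)‖` is sent there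
through its superlevel sets. Hence `n = ind ‖Δ(P)‖ ≤ m - 1`.
-/

open Finset

def strongCompatGraph {P : Type*} [PartialOrder P] (ν : P → P) : SimpleGraph P :=
  SimpleGraph.fromRel fun x y => (y ≠ x ∧ y ≠ ν x) ∧ (x ≤ ν y ∨ ν y ≤ x)

section StrongCompatGraph

variable {P : Type*} [PartialOrder P] {ν : P → P}

lemma strongCompatGraph_adj_of_lt (hinv : Function.Involutive ν) (hmono : Monotone ν)
    {a b : P} (hab : a < b) : (strongCompatGraph ν).Adj a (ν b) := by
  have hne : a ≠ ν b := by
    rintro rfl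
    have hlt := hmono.strictMono_of_injective hinv.injective hab
    rw [hinv b] at hlt
    exact lt_asymm hab hlt
  rw [strongCompatGraph, SimpleGraph.fromRel_adj]
  refine ⟨hne, Or.inl ⟨⟨hne.symm, fun h => hab.ne (hinv.injective h).symm⟩, Or.inl ?_⟩⟩
  rw [hinv b]
  exact hab.le

lemma strongCompatGraph_colorable_of_rank (hinv : Function.Involutive ν) {k : ℕ}
    (r : P → Fin k) (hr : StrictMono r) (hrν : ∀ x, r (ν x) = r x) :
    (strongCompatGraph ν).Colorable k := by
  have eq_of_le {x y : P} (hle : x ≤ y) (hxy : r x = r y) : x = y :=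
    hle.lt_or_eq.resolve_left fun hlt => (hr hlt).ne hxy
  have not_rel {x y : P} (hxy : r x = r y) (hy : y ≠ ν x) : ¬ (x ≤ ν y ∨ ν y ≤ x) := by
    have hrank : r x = r (ν y) := by rw [hrν, hxy]
    rintro (h | h)
    · exact hy (by rw [eq_of_le h hrank, hinv])
    · exact hy (by rw [← eq_of_le h hrank.symm, hinv])
  refine ⟨SimpleGraph.Coloring.mk r fun {x y} hadj hxy => ?_⟩
  rw [strongCompatGraph, SimpleGraph.fromRel_adj] at hadj
  rcases hadj.2 with ⟨⟨-, hy⟩, hle⟩ | ⟨⟨-, hx⟩, hle⟩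
  · exact not_rel hxy hy hle
  · exact not_rel hxy.symm hx hle

lemma strongCompatGraph_cliqueFree_three (hinv : Function.Involutive ν) (hmono : Monotone ν)
    (hsep : ∀ x y, x ≤ y → ¬ x ≤ ν y) : (strongCompatGraph ν).CliqueFree 3 := by
  classical
  have flip_le {x y : P} (h : x ≤ ν y) : ν x ≤ y := hinv y ▸ hmono h
  have le_flip {x y : P} (h : ν x ≤ y) : x ≤ ν y := hinv x ▸ hmono h
  have le_of_flip {x y : P} (h : ν x ≤ ν y) : x ≤ y := hinv x ▸ hinv y ▸ hmono h
  have hsep' {x y : P} (h₁ : y ≤ x) (h₂ : ν y ≤ x) : False := hsep y x h₁ (le_flip h₂)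
  have rel {x y : P} (h : (strongCompatGraph ν).Adj x y) : x ≤ ν y ∨ ν y ≤ x := by
    rw [strongCompatGraph, SimpleGraph.fromRel_adj] at h
    rcases h.2 with ⟨-, h⟩ | ⟨-, h | h⟩
    · exact h
    · exact Or.inr (flip_le h)
    · exact Or.inl (le_flip h)
  intro t ht
  obtain ⟨a, b, c, hab, hac, hbc, -⟩ := SimpleGraph.is3Clique_iff.1 ht
  rcases rel hab with h₁ | h₁ <;> rcases rel hbc with h₂ | h₂ <;> rcases rel hac with h₃ | h₃
  · exact hsep a c (h₁.trans (flip_le h₂)) h₃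
  · exact hsep' le_rfl ((h₃.trans h₁).trans (flip_le h₂))
  · exact hsep a b (h₃.trans h₂) h₁
  · exact hsep' (le_of_flip (h₃.trans h₁)) h₂
  · exact hsep b c (le_of_flip (h₁.trans h₃)) h₂
  · exact hsep' (h₂.trans h₃) h₁
  · exact hsep' le_rfl ((h₁.trans h₃).trans h₂)
  · exact hsep' ((le_flip h₂).trans h₁) h₃

end StrongCompatGraph

namespace Realization

variable {X Y Z : Type*} [PartialOrder X] [Fintype X] [PartialOrder Y] [Fintype Y]
  [PartialOrder Z] [Fintype Z]

/-- The equivariance condition of `indZ2`, for arbitrary involutions on both sides. -/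
def IsEquivariant (ν : X → X) (μ : Y → Y) (Φ : Realization X → Realization Y) : Prop :=
  ∀ x y : Realization X, (∀ q, y.val q = x.val (ν q)) → ∀ p, (Φ y).val p = (Φ x).val (μ p)

lemma IsEquivariant.comp {ν : X → X} {μ : Y → Y} {κ : Z → Z} {Φ : Realization X → Realization Y}
    {Ψ : Realization Y → Realization Z} (hΨ : IsEquivariant μ κ Ψ) (hΦ : IsEquivariant ν μ Φ) :
    IsEquivariant ν κ (Ψ ∘ Φ) :=
  fun x y hxy => hΨ (Φ x) (Φ y) (hΦ x y hxy)

variable [DecidableEq Y]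

def map (f : X → Y) (hf : Monotone f) (w : Realization X) : Realization Y :=
  ⟨fun y => ∑ x ∈ univ.filter (f · = y), w.1 x,
    fun _ => sum_nonneg fun x _ => w.2.1 x,
    by rw [sum_fiberwise, w.2.2.1],
    (hf.isChain_image w.2.2.2).mono fun y hy => by
      obtain ⟨x, hx, hwx⟩ := exists_ne_zero_of_sum_ne_zero hy
      exact ⟨x, hwx, (mem_filter.1 hx).2⟩⟩

lemma continuous_map (f : X → Y) (hf : Monotone f) : Continuous (map f hf) :=
  (continuous_pi fun _ => continuous_finsetSum _ fun x _ =>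
    (continuous_apply x).comp continuous_subtype_val).subtype_mk _

lemma map_isEquivariant {ν : X → X} {μ : Y → Y} (hν : Function.Involutive ν)
    (hμ : Function.Involutive μ) (f : X → Y) (hf : Monotone f) (hfν : ∀ x, f (ν x) = μ (f x)) :
    IsEquivariant ν μ (map f hf) := by
  intro x y hxy p
  simp only [map, hxy]
  refine sum_nbij' ν ν (fun q hq => ?_) (fun q hq => ?_) (fun q _ => hν q) (fun q _ => hν q)
    (fun _ _ => rfl)
  · simp only [mem_filter, mem_univ, true_and] at hq ⊢
    rw [hfν, hq]
  · simp only [mem_filter, mem_univ, true_and] at hq ⊢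
    rw [hfν, hq, hμ]

end Realization

section LevelGap

variable {P : Type*} [Fintype P] [DecidableEq P] {S T : Finset P} {w : P → ℝ}

noncomputable def supCompl (S : Finset P) (w : P → ℝ) : ℝ :=
  if h : Sᶜ.Nonempty then Sᶜ.sup' h w else 0

/-- For a weight `w ≥ 0` the sets with positive gap are the superlevel sets `{w ≥ t}` cut at a
jump of `w`. They form a chain, so the normalised gaps place `w` in the realization of the
barycentric subdivision. -/
noncomputable def levelGap (S : Finset P) (hS : S.Nonempty) (w : P → ℝ) : ℝ :=
  max 0 (S.inf' hS w - supCompl S w)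

lemma levelGap_nonneg (hS : S.Nonempty) (w : P → ℝ) : 0 ≤ levelGap S hS w :=
  le_max_left _ _

lemma le_supCompl {y : P} (hy : y ∉ S) : w y ≤ supCompl S w := by
  have hy' : y ∈ Sᶜ := mem_compl.2 hy
  rw [supCompl, dif_pos ⟨y, hy'⟩]
  exact le_sup' w hy'

lemma supCompl_nonneg (hw : ∀ x, 0 ≤ w x) : 0 ≤ supCompl S w := by
  unfold supCompl
  split_ifs with h
  · obtain ⟨y, hy⟩ := h
    exact (hw y).trans (le_sup' w hy)
  · exact le_rfl

lemma supCompl_lt_inf' {hS : S.Nonempty} (h : levelGap S hS w ≠ 0) :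
    supCompl S w < S.inf' hS w := by
  by_contra! hle
  exact h (max_eq_left (by linarith))

lemma subset_support_of_levelGap_ne_zero (hw : ∀ x, 0 ≤ w x) {hS : S.Nonempty}
    (h : levelGap S hS w ≠ 0) : (S : Set P) ⊆ {x | w x ≠ 0} := fun x hx hx0 => by
  linarith [inf'_le w hx, supCompl_lt_inf' h, supCompl_nonneg (S := S) hw]

lemma subset_or_subset_of_levelGap_ne_zero {hS : S.Nonempty} {hT : T.Nonempty}
    (hgS : levelGap S hS w ≠ 0) (hgT : levelGap T hT w ≠ 0) : S ⊆ T ∨ T ⊆ S := by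
  have key {A B : Finset P} {hA : A.Nonempty} (hB : B.Nonempty) (hgA : levelGap A hA w ≠ 0)
      (hle : A.inf' hA w ≤ B.inf' hB w) : B ⊆ A := fun y hy => by
    by_contra hyA
    linarith [le_supCompl (w := w) hyA, inf'_le w hy, supCompl_lt_inf' hgA]
  rcases le_total (S.inf' hS w) (T.inf' hT w) with h | h
  · exact Or.inr (key hT hgS h)
  · exact Or.inl (key hS hgT h)

lemma exists_levelGap_pos (hw : ∀ x, 0 ≤ w x) (hw1 : ∑ x, w x = 1) :
    ∃ S hS, 0 < levelGap S hS w := by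
  have hne : (univ : Finset P).Nonempty := by
    by_contra h
    rw [not_nonempty_iff_eq_empty.1 h, sum_empty] at hw1
    exact zero_ne_one hw1
  obtain ⟨x, -, hmax⟩ := exists_max_image univ w hne
  have hpos : 0 < w x := by
    by_contra! h
    have : ∑ y, w y = 0 :=
      sum_eq_zero fun y _ => le_antisymm ((hmax y (mem_univ y)).trans h) (hw y)
    linarith
  set S := univ.filter (w · = w x)
  have hS : S.Nonempty := ⟨x, by simp [S]⟩
  have hinf : S.inf' hS w = w x :=
    le_antisymm (inf'_le w (by simp [S])) (le_inf' hS w fun y hy => (mem_filter.1 hy).2.ge)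
  have hsup : supCompl S w < w x := by
    unfold supCompl
    split_ifs with h
    · obtain ⟨y, hy, hy'⟩ := exists_mem_eq_sup' h w
      rw [hy']
      have : w y ≠ w x := by simpa [S] using hy
      exact lt_of_le_of_ne (hmax y (mem_univ y)) this
    · exact hpos
  exact ⟨S, hS, lt_max_of_lt_right (by linarith)⟩

lemma continuous_levelGap (S : Finset P) (hS : S.Nonempty) :
    Continuous (levelGap S hS) := by
  have hinf : Continuous fun w : P → ℝ => S.inf' hS w :=
    Continuous.finset_inf'_apply hS fun i _ => continuous_apply i
  have hsup : Continuous (supCompl S) := by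
    unfold supCompl
    split_ifs with h
    · exact Continuous.finset_sup'_apply h fun i _ => continuous_apply i
    · exact continuous_const
  exact continuous_const.max (hinf.sub hsup)

lemma levelGap_image {ν : P → P} (hinv : Function.Involutive ν) (hS : S.Nonempty) (w : P → ℝ) :
    levelGap (S.image ν) (hS.image ν) w = levelGap S hS (w ∘ ν) := by
  have hcompl : (S.image ν)ᶜ = Sᶜ.image ν := by
    ext y
    simp only [mem_compl, mem_image]
    exact ⟨fun h => ⟨ν y, fun hy => h ⟨ν y, hy, hinv y⟩, hinv y⟩,
      fun ⟨z, hz, hzy⟩ ⟨z', hz', hzy'⟩ => hz (hinv.injective (hzy'.trans hzy.symm) ▸ hz')⟩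
  have hsup : supCompl (S.image ν) w = supCompl S (w ∘ ν) := by
    unfold supCompl
    simp only [hcompl, image_nonempty]
    split_ifs with h
    · exact sup'_image _ w
    · rfl
  rw [levelGap, levelGap, hsup, inf'_image]

end LevelGap

abbrev OrderComplexFace (P : Type*) [Preorder P] : Type _ :=
  {S : Finset P // S.Nonempty ∧ IsChain (· ≤ ·) (S : Set P)}

noncomputable instance {P : Type*} [Preorder P] [Fintype P] : Fintype (OrderComplexFace P) :=
  Fintype.ofFinite _

namespace OrderComplexFace

variable {P : Type*} [PartialOrder P] [DecidableEq P] {ν : P → P}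

def map (ν : P → P) (hmono : Monotone ν) (S : OrderComplexFace P) : OrderComplexFace P :=
  ⟨S.1.image ν, S.2.1.image ν, by rw [coe_image]; exact hmono.isChain_image S.2.2⟩

lemma map_involutive (hinv : Function.Involutive ν) (hmono : Monotone ν) :
    Function.Involutive (map ν hmono) := fun S =>
  Subtype.ext (by simp only [map, image_image, hinv.comp_self, image_id])

variable [Fintype P]

noncomputable def totalGap (w : P → ℝ) : ℝ :=
  ∑ S : OrderComplexFace P, levelGap S.1 S.2.1 w

lemma totalGap_pos (w : Realization P) : 0 < totalGap w.1 := by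
  obtain ⟨S, hS, hpos⟩ := exists_levelGap_pos w.2.1 w.2.2.1
  have hchain : IsChain (· ≤ ·) (S : Set P) :=
    w.2.2.2.mono (subset_support_of_levelGap_ne_zero w.2.1 hpos.ne')
  exact hpos.trans_le (single_le_sum (f := fun T : OrderComplexFace P => levelGap T.1 T.2.1 w.1)
    (fun T _ => levelGap_nonneg _ _) (mem_univ ⟨S, hS, hchain⟩))

lemma totalGap_comp (hinv : Function.Involutive ν) (hmono : Monotone ν) (w : P → ℝ) :
    totalGap (w ∘ ν) = totalGap w := by
  unfold totalGap
  simp only [← levelGap_image hinv]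
  exact Equiv.sum_comp ((map_involutive hinv hmono).toPerm _)
    (fun T : OrderComplexFace P => levelGap T.1 T.2.1 w)

lemma continuous_totalGap : Continuous (totalGap : (P → ℝ) → ℝ) :=
  continuous_finsetSum _ fun S _ => continuous_levelGap S.1 S.2.1

end OrderComplexFace

namespace Realization

open OrderComplexFace

variable {P : Type*} [PartialOrder P] [Fintype P] [DecidableEq P]

noncomputable def subdivide (w : Realization P) : Realization (OrderComplexFace P) :=
  ⟨fun S => levelGap S.1 S.2.1 w.1 / totalGap w.1,
    fun S => div_nonneg (levelGap_nonneg _ _) (totalGap_pos w).le,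
    by rw [← sum_div, ← totalGap, div_self (totalGap_pos w).ne'],
    fun S hS T hT _ => subset_or_subset_of_levelGap_ne_zero (div_ne_zero_iff.1 hS).1
      (div_ne_zero_iff.1 hT).1⟩

lemma continuous_subdivide : Continuous (subdivide : Realization P → _) :=
  (continuous_pi fun S : OrderComplexFace P =>
    ((continuous_levelGap S.1 S.2.1).comp continuous_subtype_val).div
      (continuous_totalGap.comp continuous_subtype_val) fun w => (totalGap_pos w).ne').subtype_mk _

lemma subdivide_isEquivariant {ν : P → P} (hinv : Function.Involutive ν) (hmono : Monotone ν) :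
    IsEquivariant ν (OrderComplexFace.map ν hmono) subdivide := by
  intro x y hxy S
  have hy : y.1 = x.1 ∘ ν := funext hxy
  simp only [subdivide, hy, OrderComplexFace.map, totalGap_comp hinv hmono]
  rw [levelGap_image hinv]

end Realization

def JoinVertex2.flip {m : ℕ} (p : JoinVertex2 m) : JoinVertex2 m := ⟨!p.b, p.i⟩

lemma JoinVertex2.flip_involutive {m : ℕ} : Function.Involutive (@JoinVertex2.flip m) :=
  fun p => by simp [JoinVertex2.flip]

section OrbitColor

variable {P : Type*} {ν : P → P} {m : ℕ}

def orbitColor (ν : P → P) (c : P → Fin m) (x : P) : Fin m := max (c x) (c (ν x))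

lemma orbitColor_apply (hinv : Function.Involutive ν) (c : P → Fin m) (x : P) :
    orbitColor ν c (ν x) = orbitColor ν c x := by
  rw [orbitColor, orbitColor, hinv x, max_comm]

variable [Fintype P]

/-- Any choice with `tieSign ν (ν x) = !tieSign ν x` would do. -/
noncomputable def tieSign (ν : P → P) (x : P) : Bool :=
  decide (Fintype.equivFin P x < Fintype.equivFin P (ν x))

/-- `true` iff `x`, rather than `ν x`, carries the orbit colour. -/
noncomputable def orbitSign (ν : P → P) (c : P → Fin m) (x : P) : Bool :=
  if c x = c (ν x) then tieSign ν x else decide (c (ν x) < c x)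

lemma orbitSign_apply (hinv : Function.Involutive ν) (hfix : ∀ x, ν x ≠ x) (c : P → Fin m)
    (x : P) : orbitSign ν c (ν x) = !orbitSign ν c x := by
  unfold orbitSign tieSign
  rw [hinv x]
  by_cases h : c x = c (ν x)
  · have hne : Fintype.equivFin P x ≠ Fintype.equivFin P (ν x) :=
      fun h' => hfix x ((Fintype.equivFin P).injective h').symm
    rcases hne.lt_or_gt with hlt | hlt <;> simp [h, hlt, hlt.not_gt]
  · rcases Ne.lt_or_gt h with hlt | hlt <;> simp [h, Ne.symm h, hlt, hlt.not_gt]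

end OrbitColor

section ChainLabel

variable {P : Type*} [PartialOrder P] {ν : P → P} {m : ℕ}
  (C : (strongCompatGraph ν).Coloring (Fin m))

noncomputable def orbitColorArgmax (S : OrderComplexFace P) : P :=
  (S.1.exists_mem_eq_sup' S.2.1 (orbitColor ν C)).choose

lemma orbitColorArgmax_mem (S : OrderComplexFace P) : orbitColorArgmax C S ∈ S.1 :=
  (S.1.exists_mem_eq_sup' S.2.1 (orbitColor ν C)).choose_spec.1

lemma orbitColor_orbitColorArgmax (S : OrderComplexFace P) :
    orbitColor ν C (orbitColorArgmax C S) = S.1.sup' S.2.1 (orbitColor ν C) :=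
  (S.1.exists_mem_eq_sup' S.2.1 (orbitColor ν C)).choose_spec.2.symm

variable [Fintype P]

/-- `C x ≠ C (ν y)` and `C (ν x) ≠ C y` for `x < y` forbid the orbit colour to sit on
different sides of the two orbits. -/
lemma orbitSign_eq_of_lt (hinv : Function.Involutive ν) (hmono : Monotone ν) {x y : P}
    (hxy : x < y) (h : orbitColor ν C x = orbitColor ν C y) :
    orbitSign ν C x = orbitSign ν C y := by
  have h₁ : C x ≠ C (ν y) := C.valid (strongCompatGraph_adj_of_lt hinv hmono hxy)
  have h₂ : C (ν x) ≠ C y := by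
    have := C.valid (strongCompatGraph_adj_of_lt hinv hmono
      (hmono.strictMono_of_injective hinv.injective hxy))
    rwa [hinv y] at this
  have hval := congrArg Fin.val h
  rw [orbitColor, orbitColor, Fin.coe_max, Fin.coe_max] at hval
  unfold orbitSign
  split_ifs <;> (try simp only [decide_eq_decide]) <;> omega

lemma orbitSign_eq_of_mem (hinv : Function.Involutive ν) (hmono : Monotone ν)
    (S : OrderComplexFace P) {x y : P} (hx : x ∈ S.1) (hy : y ∈ S.1)
    (h : orbitColor ν C x = orbitColor ν C y) : orbitSign ν C x = orbitSign ν C y := by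
  rcases eq_or_ne x y with rfl | hne
  · rfl
  rcases S.2.2 hx hy hne with hle | hle
  · exact orbitSign_eq_of_lt C hinv hmono (hle.lt_of_ne hne) h
  · exact (orbitSign_eq_of_lt C hinv hmono (hle.lt_of_ne hne.symm) h.symm).symm

noncomputable def chainLabel (S : OrderComplexFace P) : JoinVertex2 m :=
  ⟨orbitSign ν C (orbitColorArgmax C S), orbitColor ν C (orbitColorArgmax C S)⟩

lemma chainLabel_mono (hinv : Function.Involutive ν) (hmono : Monotone ν) :
    Monotone (chainLabel C) := by
  intro S T hST
  have hmem := hST (orbitColorArgmax_mem C S)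
  have hle : orbitColor ν C (orbitColorArgmax C S) ≤ orbitColor ν C (orbitColorArgmax C T) := by
    rw [orbitColor_orbitColorArgmax C T]
    exact le_sup' _ hmem
  rcases hle.lt_or_eq with hlt | heq
  · exact Or.inr hlt
  · refine Or.inl ?_
    rw [chainLabel, chainLabel, heq,
      orbitSign_eq_of_mem C hinv hmono T hmem (orbitColorArgmax_mem C T) heq]

variable [DecidableEq P]

lemma chainLabel_map (hinv : Function.Involutive ν) (hmono : Monotone ν) (hfix : ∀ x, ν x ≠ x)
    (S : OrderComplexFace P) :
    chainLabel C (OrderComplexFace.map ν hmono S) = (chainLabel C S).flip := by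
  have hcolor : orbitColor ν C (orbitColorArgmax C (OrderComplexFace.map ν hmono S)) =
      orbitColor ν C (orbitColorArgmax C S) := by
    rw [orbitColor_orbitColorArgmax, orbitColor_orbitColorArgmax]
    simp only [OrderComplexFace.map, sup'_image]
    congr 1
    exact funext (orbitColor_apply hinv C)
  obtain ⟨z, hz, hzν⟩ := mem_image.1 (orbitColorArgmax_mem C (OrderComplexFace.map ν hmono S))
  have hsign : orbitSign ν C (orbitColorArgmax C (OrderComplexFace.map ν hmono S)) =
      !orbitSign ν C (orbitColorArgmax C S) := by
    have hzcolor : orbitColor ν C z = orbitColor ν C (orbitColorArgmax C S) := by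
      rw [← orbitColor_apply hinv, hzν, hcolor]
    rw [← hzν, orbitSign_apply hinv hfix,
      orbitSign_eq_of_mem C hinv hmono S hz (orbitColorArgmax_mem C S) hzcolor]
  rw [chainLabel, chainLabel, JoinVertex2.flip, hsign, hcolor]

end ChainLabel

section IndexBound

variable {P : Type*} [PartialOrder P] [Fintype P] {ν : P → P}

theorem exists_continuous_isEquivariant_of_coloring (hinv : Function.Involutive ν)
    (hmono : Monotone ν) (hfix : ∀ x, ν x ≠ x) {m : ℕ}
    (C : (strongCompatGraph ν).Coloring (Fin m)) :
    ∃ Φ : Realization P → Realization (JoinVertex2 m),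
      Continuous Φ ∧ Realization.IsEquivariant ν JoinVertex2.flip Φ := by
  classical
  exact ⟨Realization.map (chainLabel C) (chainLabel_mono C hinv hmono) ∘ Realization.subdivide,
    (Realization.continuous_map _ _).comp Realization.continuous_subdivide,
    (Realization.map_isEquivariant (OrderComplexFace.map_involutive hinv hmono)
      JoinVertex2.flip_involutive _ _ (chainLabel_map C hinv hmono hfix)).comp
      (Realization.subdivide_isEquivariant hinv hmono)⟩

theorem indZ2_le_of_colorable (hinv : Function.Involutive ν) (hmono : Monotone ν)
    (hfix : ∀ x, ν x ≠ x) {k : ℕ} (h : (strongCompatGraph ν).Colorable (k + 1)) :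
    indZ2 P ν ≤ k := by
  obtain ⟨C⟩ := h
  obtain ⟨Φ, hΦ, hequiv⟩ := exists_continuous_isEquivariant_of_coloring hinv hmono hfix C
  exact Nat.sInf_le ⟨Φ, hΦ, hequiv⟩

end IndexBound

section FacePoset

variable {V : Type*} [DecidableEq V] {neg : V → V} {K : Finset (Finset V)}
  (hact : ∀ s ∈ K, s.image neg ∈ K)

lemma negFace_involutive (hinv : Function.Involutive neg) :
    Function.Involutive (negFace neg K hact) :=
  fun s => Subtype.ext (by simp only [negFace, image_image, hinv.comp_self, image_id])

lemma negFace_monotone : Monotone (negFace neg K hact) :=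
  fun _ _ h => image_subset_image h

lemma not_le_negFace_of_le (hne : ∀ s ∈ K, s.Nonempty)
    (hfree : ∀ s ∈ K, Disjoint s (s.image neg)) {s t : {s // s ∈ K}} (hst : s ≤ t) :
    ¬ s ≤ negFace neg K hact t := fun hst' => by
  obtain ⟨v, hv⟩ := hne s.1 s.2
  exact disjoint_left.1 (hfree t.1 t.2) (hst hv) (hst' hv)

lemma strongCompatGraph_negFace :
    strongCompatGraph (negFace neg K hact) = SimpleGraph.fromRel fun x y : {s // s ∈ K} =>
      (y.1 ≠ x.1 ∧ y.1 ≠ x.1.image neg) ∧ (x.1 ⊆ y.1.image neg ∨ y.1.image neg ⊆ x.1) := by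
  simp only [strongCompatGraph, negFace, ne_eq, Subtype.ext_iff]
  rfl

lemma strongCompatGraph_negFace_colorable (hinv : Function.Involutive neg)
    (hne : ∀ s ∈ K, s.Nonempty) {n : ℕ} (hdim : ∀ s ∈ K, s.card ≤ n + 1) :
    (strongCompatGraph (negFace neg K hact)).Colorable (n + 1) := by
  refine strongCompatGraph_colorable_of_rank (negFace_involutive hact hinv)
    (fun s => ⟨s.1.card - 1, by have := hdim s.1 s.2; omega⟩) (fun s t hst => ?_) (fun s => ?_)
  · have hs := card_pos.2 (hne s.1 s.2)
    have hst := card_lt_card (Subtype.coe_lt_coe.2 hst)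
    simp only [Fin.mk_lt_mk]
    omega
  · simp only [negFace, card_image_of_injective _ hinv.injective]

end FacePoset

theorem sphere_strongCompat_triangleFree_chromatic_general
    (V : Type*) [DecidableEq V] (neg : V → V)
    (hinv : Function.Involutive neg)
    (K : Finset (Finset V))
    (hne : ∀ s ∈ K, s.Nonempty)
    (hact : ∀ s ∈ K, s.image neg ∈ K)
    (hfree : ∀ s ∈ K, Disjoint s (s.image neg))
    (n : ℕ)
    (hdim_le : ∀ s ∈ K, s.card ≤ n + 1)
    (hdim_eq : ∃ s ∈ K, s.card = n + 1)
    (hind : indZ2 {s // s ∈ K} (negFace neg K hact) = n) :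
    (SimpleGraph.fromRel (fun x y : {s // s ∈ K} =>
        (y.1 ≠ x.1 ∧ y.1 ≠ x.1.image neg) ∧
        (x.1 ⊆ y.1.image neg ∨ y.1.image neg ⊆ x.1))).CliqueFree 3 ∧
    (SimpleGraph.fromRel (fun x y : {s // s ∈ K} =>
        (y.1 ≠ x.1 ∧ y.1 ≠ x.1.image neg) ∧
        (x.1 ⊆ y.1.image neg ∨ y.1.image neg ⊆ x.1))).chromaticNumber
      = ((n + 1 : ℕ) : ℕ∞) := by
  have hinvK := negFace_involutive hact hinv
  have hmonoK := negFace_monotone hact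
  have hsep : ∀ s t, s ≤ t → ¬ s ≤ negFace neg K hact t :=
    fun _ _ => not_le_negFace_of_le hact hne hfree
  rw [← strongCompatGraph_negFace hact, Nat.cast_add_one,
    SimpleGraph.chromaticNumber_eq_iff_colorable_not_colorable]
  refine ⟨strongCompatGraph_cliqueFree_three hinvK hmonoK hsep,
    strongCompatGraph_negFace_colorable hact hinv hne hdim_le, fun hcol => ?_⟩
  obtain ⟨s, hs, -⟩ := hdim_eq
  cases n with
  | zero => exact (SimpleGraph.colorable_zero_iff.1 hcol).false ⟨s, hs⟩
  | succ k =>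
    have := indZ2_le_of_colorable hinvK hmonoK (fun x hx => hsep x x le_rfl hx.ge) hcol
    omega

/-- Let `K` be a finite free simplicial `ℤ₂`-complex triangulating `𝕊ⁿ`, so that
`dim K = n` and `ind_{ℤ₂} ‖K‖ = n`. Then the strong compatibility graph of the face
poset of `K` (vertices the nonempty faces, `σ, τ` adjacent iff `τ ∉ {σ, -σ}` and `σ`
is comparable with `-τ`) is triangle-free and has chromatic number exactly `n + 1`. -/
theorem sphere_strongCompat_triangleFree_chromatic
    (V : Type*) [DecidableEq V] [Fintype V] (neg : V → V)
    (hinv : Function.Involutive neg)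
    (K : Finset (Finset V))
    (hne : ∀ s ∈ K, s.Nonempty)
    (hdc : ∀ s ∈ K, ∀ t : Finset V, t ⊆ s → t.Nonempty → t ∈ K)
    (hact : ∀ s ∈ K, s.image neg ∈ K)
    (hfree : ∀ s ∈ K, Disjoint s (s.image neg))
    (n : ℕ)
    (hdim_le : ∀ s ∈ K, s.card ≤ n + 1)
    (hdim_eq : ∃ s ∈ K, s.card = n + 1)
    (hind : indZ2 {s // s ∈ K} (negFace neg K hact) = n) :
    (SimpleGraph.fromRel (fun x y : {s // s ∈ K} =>
        (y.1 ≠ x.1 ∧ y.1 ≠ x.1.image neg) ∧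
        (x.1 ⊆ y.1.image neg ∨ y.1.image neg ⊆ x.1))).CliqueFree 3 ∧
    (SimpleGraph.fromRel (fun x y : {s // s ∈ K} =>
        (y.1 ≠ x.1 ∧ y.1 ≠ x.1.image neg) ∧
        (x.1 ⊆ y.1.image neg ∨ y.1.image neg ⊆ x.1))).chromaticNumber
      = ((n + 1 : ℕ) : ℕ∞) :=
  sphere_strongCompat_triangleFree_chromatic_general V neg hinv K hne hact hfree n hdim_le hdim_eq
    hind
end
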